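/- Let ι be a nonempty finite index set, A : Matrix ι ι ℝ a matrix whose kernel (of v ↦ A.mulVec v) is exactly the ℝ-span of the all-ones vector 1, C : ι → ℝ with S := Σ_{i∈ι} C i ≠ 0, and G : Matrix κ ι ℝ with G.mulVec 1 = 0. Let J be a finite set of wells with sources q_j : ι → ℝ, total rates s_j := Σ_{i∈ι} q_j i, and pseudo-steady-state solutions p_j satisfying A.mulVec p_j = −q_j + (s_j/S) • C. Suppose c : J → ℝ satisfies Σ_{j∈J} c j * s_j = 0, and p_ss : ι → ℝ is any steady-state solution satisfying A.mulVec p_ss = −Σ_{j∈J} c j • q_j. Then G.mulVec (Σ_{j∈J} c j • p_j) = G.mulVec p_ss. (The velocity field obtained by superposing single-well pseudo-steady-state velocity responses equals the velocity field of the directly simulated steady state.) -/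

import Mathlib

/-!
By linearity, `A` maps `∑ c_j p_j` to `-∑ c_j q_j` plus the storage term `(∑ c_j s_j / S) • C`,
which vanishes for balanced rates. So `∑ c_j p_j` and `p_ss` differ by an element of `ker A`,
a constant field, and `G` annihilates constant fields.
-/

namespace Matrix

variable {R ι κ m J : Type*} [CommRing R] [Fintype ι]

theorem mulVec_eq_mulVec_of_ker_le {A : Matrix m ι R} {G : Matrix κ ι R}
    (hAG : LinearMap.ker A.mulVecLin ≤ LinearMap.ker G.mulVecLin) {x y : ι → R}
    (hxy : A *ᵥ x = A *ᵥ y) : G *ᵥ x = G *ᵥ y := by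
  have hdiff : x - y ∈ LinearMap.ker G.mulVecLin :=
    hAG (by simp [mulVec_sub, hxy])
  simpa [mulVec_sub, sub_eq_zero] using hdiff

theorem span_one_le_ker_mulVecLin {G : Matrix κ ι R} (hG : G *ᵥ 1 = 0) :
    Submodule.span R {1} ≤ LinearMap.ker G.mulVecLin :=
  (Submodule.span_singleton_le_iff_mem _ _).2 hG

theorem mulVec_sum_smul (A : Matrix κ ι R) (s : Finset J) (c : J → R) (p : J → ι → R) :
    A *ᵥ ∑ j ∈ s, c j • p j = ∑ j ∈ s, c j • A *ᵥ p j := by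
  simp only [mulVec_sum, mulVec_smul]

end Matrix

open Matrix

theorem mulVec_sum_smul_eq_neg_sum_smul_of_balanced {K ι J : Type*} [Field K] [Fintype ι]
    [Fintype J] (A : Matrix ι ι K) (C : ι → K) (q p : J → ι → K)
    (hpss : ∀ j, A *ᵥ p j = -q j + ((∑ i, q j i) / (∑ i, C i)) • C)
    (c : J → K) (hc : ∑ j, c j * (∑ i, q j i) = 0) :
    A *ᵥ ∑ j, c j • p j = -∑ j, c j • q j := by
  have storage_cancels : ∑ j, c j • (((∑ i, q j i) / (∑ i, C i)) • C) = 0 := by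
    simp only [smul_smul, ← Finset.sum_smul, mul_div_assoc', ← Finset.sum_div, hc, zero_div,
      zero_smul]
  simp only [mulVec_sum_smul, hpss, smul_add, Finset.sum_add_distrib, storage_cancels, add_zero,
    smul_neg, Finset.sum_neg_distrib]

theorem superposed_velocity_eq_steady_state_velocity_general
    {ι κ J : Type*} [Fintype ι] [Fintype J]
    (A : Matrix ι ι ℝ)
    (hker : LinearMap.ker A.mulVecLin = Submodule.span ℝ {(1 : ι → ℝ)})
    (C : ι → ℝ)
    (G : Matrix κ ι ℝ) (hG : G.mulVec (1 : ι → ℝ) = 0)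
    (q : J → ι → ℝ) (p : J → ι → ℝ)
    (hpss : ∀ j, A.mulVec (p j) = -q j + ((∑ i, q j i) / (∑ i, C i)) • C)
    (c : J → ℝ) (hc : ∑ j, c j * (∑ i, q j i) = 0)
    (p_ss : ι → ℝ) (hss : A.mulVec p_ss = -(∑ j, c j • q j)) :
    G.mulVec (∑ j, c j • p j) = G.mulVec p_ss := by
  have hkerG : LinearMap.ker A.mulVecLin ≤ LinearMap.ker G.mulVecLin :=
    hker ▸ span_one_le_ker_mulVecLin hG
  exact mulVec_eq_mulVec_of_ker_le hkerG
    ((mulVec_sum_smul_eq_neg_sum_smul_of_balanced A C q p hpss c hc).trans hss.symm)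

/-- The velocity field obtained by superposing single-well pseudo-steady-state
velocity responses equals the velocity field of the directly simulated steady
state, under the balanced-rate condition VRR = 1. -/
theorem superposed_velocity_eq_steady_state_velocity
    {ι κ J : Type*} [Fintype ι] [Nonempty ι] [Fintype κ] [Fintype J]
    (A : Matrix ι ι ℝ)
    (hker : LinearMap.ker A.mulVecLin = Submodule.span ℝ {(1 : ι → ℝ)})
    (C : ι → ℝ) (hS : ∑ i, C i ≠ 0)
    (G : Matrix κ ι ℝ) (hG : G.mulVec (1 : ι → ℝ) = 0)
    (q : J → ι → ℝ) (p : J → ι → ℝ)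
    (hpss : ∀ j, A.mulVec (p j) = -q j + ((∑ i, q j i) / (∑ i, C i)) • C)
    (c : J → ℝ) (hc : ∑ j, c j * (∑ i, q j i) = 0)
    (p_ss : ι → ℝ) (hss : A.mulVec p_ss = -(∑ j, c j • q j)) :
    G.mulVec (∑ j, c j • p j) = G.mulVec p_ss :=
  superposed_velocity_eq_steady_state_velocity_general A hker C G hG q p hpss c hc p_ss hss
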